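/- Let p be a prime such that 2w − 2 divides p − 1 and such that the Legendre symbols satisfy (i/p)·((i−w)/p) = −1 for all i = 1, ..., w−1. If there exists an equi-difference conflict-avoiding code of length p and weight w with (p−1)/(2w−2) codewords, then for every integer r ≥ 1, K(w·p^r, w) = (p^r − 1)/(2w − 2) + (p^r − 1)/2 + 1. -/

import Mathlib

open Pointwise

/-- The set of nonzero differences of `S`. -/
def dstar {L : ℕ} (S : Set (ZMod L)) : Set (ZMod L) := (S - S) \ {0}

/-- A conflict-avoiding code of length `L` and weight `w`: a collection of
`w`-subsets of `ZMod L` with pairwise disjoint nonzero difference sets. -/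
def IsCAC (L w : ℕ) (C : Set (Set (ZMod L))) : Prop :=
  (∀ S ∈ C, S.ncard = w) ∧
  ∀ S ∈ C, ∀ T ∈ C, S ≠ T → Disjoint (dstar S) (dstar T)

/-- A set is equi-difference of weight `w` if it equals `{0, g, 2g, ..., (w-1)g}`
for some generator `g`. -/
def IsEquiDiff (L w : ℕ) (S : Set (ZMod L)) : Prop :=
  ∃ g : ZMod L, S = {x | ∃ k : ℕ, k < w ∧ x = (k : ZMod L) * g}

/-- An equi-difference conflict-avoiding code. -/
def IsECAC (L w : ℕ) (C : Set (Set (ZMod L))) : Prop :=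
  IsCAC L w C ∧ ∀ S ∈ C, IsEquiDiff L w S

open Finset
open scoped Pointwise

lemma CD_pp {p r : ℕ} (hp : p.Prime) (hr : r ≠ 0) {s t : Finset (ZMod (p^r))}
    (hs : s.Nonempty) (ht : t.Nonempty) (hcard : s.card + t.card - 1 ≤ p) :
    s.card + t.card - 1 ≤ (s - t).card := by
  classical
  have h1 : (s - t) = s + (-t) := sub_eq_add_neg s t
  have h2 : (-t).card = t.card := Finset.card_neg t
  have hmin := cauchy_davenport_minOrder_add hs (ht.neg)
  rw [ZMod.minOrder (pow_ne_zero r hp.pos.ne') (Nat.one_lt_pow hr hp.one_lt).ne'] at hmin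
  rw [Nat.Prime.pow_minFac hp hr] at hmin
  rw [h1]
  have : (min (p : ℕ∞) (↑(s.card + (-t).card - 1))) = ((s.card + t.card - 1 : ℕ) : ℕ∞) := by
    rw [h2, min_eq_right]
    exact_mod_cast hcard
  rw [this] at hmin
  exact_mod_cast hmin

section Key

variable {p w r : ℕ} [Fact p.Prime]

/-- key per-codeword inequality -/
lemma key_ineq (hw : 2 ≤ w) (hpw : 2 * w - 1 ≤ p) (hr : r ≠ 0)
    (φ : ZMod (w * p ^ r) →+* ZMod (p ^ r))
    (S : Finset (ZMod (w * p ^ r))) (hS : S.card = w) :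
    2 * w ≤ ((S - S).erase 0).card + (((S - S).erase 0).filter (fun x => φ x = 0)).card + 2 := by
  classical
  have hp : p.Prime := Fact.out
  have hSne : S.Nonempty := by
    rw [← Finset.card_pos, hS]; omega
  set A : Finset (ZMod (p ^ r)) := S.image φ with hA
  have hAne : A.Nonempty := hSne.image φ
  set m : ZMod (p ^ r) → ℕ := fun y => (S.filter (fun a => φ a = y)).card with hm
  set k : ℕ := A.sup m with hk
  obtain ⟨y0, hy0A, hy0⟩ := Finset.exists_mem_eq_sup A hAne m
  have hsum : ∑ y ∈ A, m y = w := by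
    rw [← hS]
    exact (Finset.card_eq_sum_card_fiberwise (fun x hx => Finset.mem_image_of_mem φ hx)).symm
  have hmk : ∀ y ∈ A, m y ≤ k := fun y hy => Finset.le_sup hy
  have hk1 : 1 ≤ k := by
    have : m y0 ≠ 0 := by
      rw [hm]
      simp only [Finset.card_ne_zero]
      obtain ⟨a, ha, hfa⟩ := Finset.mem_image.1 hy0A
      exact ⟨a, Finset.mem_filter.2 ⟨ha, hfa⟩⟩
    omega
  -- the fiber of the difference set over `c`
  set Fib : ZMod (p ^ r) → Finset (ZMod (w * p ^ r)) :=
    fun c => (S - S).filter (fun x => φ x = c) with hFib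
  -- fibers of S over y
  set F : ZMod (p ^ r) → Finset (ZMod (w * p ^ r)) :=
    fun y => S.filter (fun a => φ a = y) with hF
  have hFsub : ∀ y y', y ∈ A → y' ∈ A → F y - F y' ⊆ Fib (y - y') := by
    intro y y' _ _ x hx
    rw [Finset.mem_sub] at hx
    obtain ⟨a, ha, b, hb, rfl⟩ := hx
    rw [Finset.mem_filter] at ha hb
    refine Finset.mem_filter.2 ⟨Finset.sub_mem_sub ha.1 hb.1, ?_⟩
    rw [map_sub, ha.2, hb.2]
  have hFcard : ∀ y y', y ∈ A → y' ∈ A → m y ≤ (F y - F y').card := by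
    intro y y' hy hy'
    obtain ⟨b, hbm, hfb⟩ := Finset.mem_image.1 hy'
    have hb : b ∈ F y' := Finset.mem_filter.2 ⟨hbm, hfb⟩
    calc m y = ((F y).image (fun a => a - b)).card := by
          rw [Finset.card_image_of_injective _ (sub_left_injective)]
      _ ≤ (F y - F y').card := by
          apply Finset.card_le_card
          intro x hx
          rw [Finset.mem_image] at hx
          obtain ⟨a, ha, rfl⟩ := hx
          exact Finset.mem_sub.2 ⟨a, ha, b, hb, rfl⟩
  -- A_t
  set At : ℕ → Finset (ZMod (p ^ r)) := fun t => A.filter (fun y => t ≤ m y) with hAt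
  have hAtne : ∀ t ∈ Finset.Icc 1 k, (At t).Nonempty := by
    intro t ht
    rw [Finset.mem_Icc] at ht
    exact ⟨y0, Finset.mem_filter.2 ⟨hy0A, by omega⟩⟩
  have hAtsubA : ∀ t, At t ⊆ A := fun t => Finset.filter_subset _ _
  -- CD for each t
  have hCD : ∀ t ∈ Finset.Icc 1 k,
      (At t).card + A.card ≤ ((At t - A).erase 0).card + 2 := by
    intro t ht
    have h1 : (At t).card + A.card - 1 ≤ (At t - A).card := by
      apply CD_pp hp hr (hAtne t ht) hAne
      have h2 : (At t).card ≤ w := le_trans (Finset.card_le_card (hAtsubA t))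
        (le_trans (Finset.card_image_le) (le_of_eq hS))
      have h3 : A.card ≤ w := le_trans (Finset.card_image_le) (le_of_eq hS)
      omega
    have h0 : (0 : ZMod (p ^ r)) ∈ At t - A := by
      obtain ⟨y, hy⟩ := hAtne t ht
      exact Finset.mem_sub.2 ⟨y, hy, y, hAtsubA t hy, sub_self y⟩
    have h4 : ((At t - A).erase 0).card + 1 = (At t - A).card := Finset.card_erase_add_one h0
    have h5 : 1 ≤ (At t).card + A.card := by
      have := Finset.card_pos.2 hAne; omega
    omega
  -- claim 5 : for t ∈ [1,k], c ∈ (At t - A).erase 0 : t ≤ (Fib c).card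
  have hclaim5 : ∀ t ∈ Finset.Icc 1 k, ∀ c ∈ (At t - A).erase 0, t ≤ (Fib c).card := by
    intro t _ c hc
    obtain ⟨hc0, hcm⟩ := Finset.mem_erase.1 hc
    rw [Finset.mem_sub] at hcm
    obtain ⟨y, hy, y', hy', rfl⟩ := hcm
    rw [hAt, Finset.mem_filter] at hy
    calc t ≤ m y := hy.2
      _ ≤ (F y - F y').card := hFcard y y' hy.1 hy'
      _ ≤ (Fib (y - y')).card := Finset.card_le_card (hFsub y y' hy.1 hy')
  -- claim 6 : sum exchange
  have hclaim6 : ∑ t ∈ Finset.Icc 1 k, ((At t - A).erase 0).card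
      ≤ ∑ c ∈ (A - A).erase 0, (Fib c).card := by
    have hsub : ∀ t ∈ Finset.Icc 1 k, (At t - A).erase 0 ⊆ (A - A).erase 0 := by
      intro t _
      apply Finset.erase_subset_erase
      exact Finset.sub_subset_sub (hAtsubA t) (Finset.Subset.refl A)
    calc ∑ t ∈ Finset.Icc 1 k, ((At t - A).erase 0).card
        = ∑ t ∈ Finset.Icc 1 k, ∑ c ∈ (A - A).erase 0,
            (if c ∈ (At t - A).erase 0 then 1 else 0) := by
          apply Finset.sum_congr rfl
          intro t ht
          rw [Finset.sum_ite_mem, Finset.sum_const, smul_eq_mul, mul_one]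
          congr 1
          rw [Finset.inter_eq_right.2 (hsub t ht)]
      _ = ∑ c ∈ (A - A).erase 0, ∑ t ∈ Finset.Icc 1 k,
            (if c ∈ (At t - A).erase 0 then 1 else 0) := Finset.sum_comm
      _ ≤ ∑ c ∈ (A - A).erase 0, (Fib c).card := by
          apply Finset.sum_le_sum
          intro c _
          calc (∑ t ∈ Finset.Icc 1 k, if c ∈ (At t - A).erase 0 then 1 else 0)
              = ((Finset.Icc 1 k).filter (fun t => c ∈ (At t - A).erase 0)).card := by
                rw [Finset.card_filter]
            _ ≤ (Finset.Icc 1 ((Fib c).card)).card := by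
                apply Finset.card_le_card
                intro t ht
                rw [Finset.mem_filter] at ht
                rw [Finset.mem_Icc]
                refine ⟨(Finset.mem_Icc.1 ht.1).1, hclaim5 t ht.1 c ht.2⟩
            _ = (Fib c).card := by rw [Nat.card_Icc]; omega
  -- claim 12 : ∑_t (At t).card = w
  have hclaim12 : ∑ t ∈ Finset.Icc 1 k, (At t).card = w := by
    calc ∑ t ∈ Finset.Icc 1 k, (At t).card
        = ∑ t ∈ Finset.Icc 1 k, ∑ y ∈ A, (if t ≤ m y then 1 else 0) := by
          apply Finset.sum_congr rfl
          intro t _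
          rw [hAt, Finset.card_filter]
      _ = ∑ y ∈ A, ∑ t ∈ Finset.Icc 1 k, (if t ≤ m y then 1 else 0) := Finset.sum_comm
      _ = ∑ y ∈ A, m y := by
          apply Finset.sum_congr rfl
          intro y hy
          calc (∑ t ∈ Finset.Icc 1 k, if t ≤ m y then 1 else 0)
              = ((Finset.Icc 1 k).filter (fun t => t ≤ m y)).card := by
                rw [Finset.card_filter]
            _ = (Finset.Icc 1 (m y)).card := by
                congr 1
                ext t
                simp only [Finset.mem_filter, Finset.mem_Icc]
                have := hmk y hy
                omega
            _ = m y := by rw [Nat.card_Icc]; omega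
      _ = w := hsum
  -- fiber partition of S - S
  have hpart : (S - S).card = (Fib 0).card + ∑ c ∈ (A - A).erase 0, (Fib c).card := by
    have himg : ∀ x ∈ S - S, φ x ∈ insert (0 : ZMod (p^r)) ((A - A).erase 0) := by
      intro x hx
      rw [Finset.mem_sub] at hx
      obtain ⟨a, ha, b, hb, rfl⟩ := hx
      by_cases h : φ (a - b) = 0
      · rw [h]; exact Finset.mem_insert_self _ _
      · refine Finset.mem_insert_of_mem (Finset.mem_erase.2 ⟨h, ?_⟩)
        rw [map_sub]
        exact Finset.sub_mem_sub (Finset.mem_image_of_mem φ ha) (Finset.mem_image_of_mem φ hb)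
    rw [Finset.card_eq_sum_card_fiberwise himg]
    rw [Finset.sum_insert (Finset.notMem_erase 0 _)]
  -- Fib 0 ≥ k
  have hFib0 : k ≤ (Fib 0).card := by
    calc k = m y0 := by rw [hk]; exact hy0
      _ ≤ (F y0 - F y0).card := hFcard y0 y0 hy0A hy0A
      _ ≤ (Fib 0).card := by
          have := hFsub y0 y0 hy0A hy0A
          rw [sub_self] at this
          exact Finset.card_le_card this
  -- erase counts
  have h0SS : (0 : ZMod (w * p ^ r)) ∈ S - S := by
    obtain ⟨a, ha⟩ := hSne
    exact Finset.mem_sub.2 ⟨a, ha, a, ha, sub_self a⟩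
  have hdc : ((S - S).erase 0).card + 1 = (S - S).card := Finset.card_erase_add_one h0SS
  have h0F0 : (0 : ZMod (w * p ^ r)) ∈ Fib 0 := Finset.mem_filter.2 ⟨h0SS, map_zero φ⟩
  have hac : (((S - S).erase 0).filter (fun x => φ x = 0)) = (Fib 0).erase 0 := by
    ext x
    simp only [Finset.mem_filter, Finset.mem_erase, hFib]
    tauto
  have hac2 : (((S - S).erase 0).filter (fun x => φ x = 0)).card + 1 = (Fib 0).card := by
    rw [hac]
    exact Finset.card_erase_add_one h0F0
  -- sum the CD inequalities
  have hCDsum : ∑ t ∈ Finset.Icc 1 k, ((At t).card + A.card)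
      ≤ (∑ t ∈ Finset.Icc 1 k, ((At t - A).erase 0).card) + 2 * k := by
    calc ∑ t ∈ Finset.Icc 1 k, ((At t).card + A.card)
        ≤ ∑ t ∈ Finset.Icc 1 k, (((At t - A).erase 0).card + 2) :=
          Finset.sum_le_sum hCD
      _ = (∑ t ∈ Finset.Icc 1 k, ((At t - A).erase 0).card) + 2 * k := by
          rw [Finset.sum_add_distrib, Finset.sum_const, Nat.card_Icc]
          have : k + 1 - 1 = k := by omega
          rw [this, smul_eq_mul, mul_comm]
  have hws : w ≤ k * A.card := by
    calc w = ∑ y ∈ A, m y := hsum.symm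
      _ ≤ ∑ y ∈ A, k := Finset.sum_le_sum hmk
      _ = A.card * k := by rw [Finset.sum_const, smul_eq_mul]
      _ = k * A.card := mul_comm _ _
  have hsumAcard : ∑ t ∈ Finset.Icc 1 k, A.card = k * A.card := by
    rw [Finset.sum_const, Nat.card_Icc, smul_eq_mul]
    have : k + 1 - 1 = k := by omega
    rw [this]
  have hfinal : w + k * A.card ≤
      (∑ c ∈ (A - A).erase 0, (Fib c).card) + 2 * k := by
    have := hCDsum
    rw [Finset.sum_add_distrib, hclaim12, hsumAcard] at this
    omega
  omega

end Key
/-- p-adic valuation of an element of `ZMod (p^r)` via its canonical representative -/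
def nuP (p r : ℕ) (x : ZMod (p ^ r)) : ℕ := (x.val).factorization p

/-- unit part mod p of an element of `ZMod (p^r)` -/
def rhoP (p r : ℕ) (x : ZMod (p ^ r)) : ZMod p := ((x.val / p ^ (nuP p r x) : ℕ) : ZMod p)

section rho
variable {p r : ℕ} [Fact p.Prime] (hr : r ≠ 0)

lemma rhoP_ne_zero {x : ZMod (p ^ r)} (hx : x ≠ 0) : rhoP p r x ≠ 0 := by
  have hp : p.Prime := Fact.out
  haveI : NeZero (p ^ r) := ⟨pow_ne_zero r hp.pos.ne'⟩
  have hval : x.val ≠ 0 := fun h => hx ((ZMod.val_eq_zero x).1 h)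
  rw [rhoP]
  rw [Ne, ZMod.natCast_eq_zero_iff]
  exact Nat.not_dvd_ordCompl hp hval

lemma nuP_lt {x : ZMod (p ^ r)} (hx : x ≠ 0) : nuP p r x < r := by
  have hp : p.Prime := Fact.out
  haveI : NeZero (p ^ r) := ⟨pow_ne_zero r hp.pos.ne'⟩
  have hval : x.val ≠ 0 := fun h => hx ((ZMod.val_eq_zero x).1 h)
  have h1 : p ^ (nuP p r x) ∣ x.val := Nat.ordProj_dvd _ _
  have h2 : p ^ (nuP p r x) ≤ x.val := Nat.le_of_dvd (Nat.pos_of_ne_zero hval) h1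
  have h3 : x.val < p ^ r := ZMod.val_lt x
  exact (Nat.pow_lt_pow_iff_right hp.one_lt).1 (lt_of_le_of_lt h2 h3)

/-- multiplicativity of rhoP by elements whose val is prime to p -/
lemma rhoP_mul (c x : ZMod (p ^ r)) (hx : x ≠ 0) (hc : ¬ p ∣ c.val) :
    c * x ≠ 0 ∧ rhoP p r (c * x) = (c.val : ZMod p) * rhoP p r x := by
  have hp : p.Prime := Fact.out
  haveI : NeZero (p ^ r) := ⟨pow_ne_zero r hp.pos.ne'⟩
  have hval : x.val ≠ 0 := fun h => hx ((ZMod.val_eq_zero x).1 h)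
  have hcu : IsUnit c := by
    have h1 : Nat.Coprime c.val (p ^ r) :=
      Nat.Coprime.pow_right r (Nat.Coprime.symm ((hp.coprime_iff_not_dvd).2 hc))
    have := (ZMod.isUnit_iff_coprime c.val (p ^ r)).2 h1
    rwa [ZMod.natCast_rightInverse c] at this
  have hcx : c * x ≠ 0 := by
    intro h
    exact hx ((hcu.mul_right_eq_zero).1 h)
  refine ⟨hcx, ?_⟩
  set s := nuP p r x with hs
  set n := x.val with hn
  set m := n / p ^ s with hm
  have hnm : p ^ s * m = n := Nat.ordProj_mul_ordCompl_eq_self n p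
  have hpm : ¬ p ∣ m := Nat.not_dvd_ordCompl hp hval
  have hsr : s < r := nuP_lt hx
  set c' := c.val with hc'
  set q := (c * x).val with hq
  have hq0 : q ≠ 0 := fun h => hcx ((ZMod.val_eq_zero _).1 h)
  have hqval : q = (c' * n) % (p ^ r) := ZMod.val_mul c x
  set K := c' * n / p ^ r with hK
  have heq : q + p ^ r * K = c' * n := by
    rw [hqval, hK]
    exact Nat.mod_add_div _ _
  have hdvd_n : p ^ s ∣ n := Nat.ordProj_dvd n p
  have hsub : q = c' * n - p ^ r * K := by omega
  have hdvd1 : p ^ s ∣ q := by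
    rw [hsub]
    exact Nat.dvd_sub (hdvd_n.mul_left c') (dvd_mul_of_dvd_left (pow_dvd_pow p hsr.le) K)
  have hndvd1 : ¬ p ^ (s + 1) ∣ q := by
    intro hdd
    have h1 : p ^ (s + 1) ∣ c' * n := by
      rw [← heq]
      exact Dvd.dvd.add hdd (dvd_mul_of_dvd_left (pow_dvd_pow p (by omega)) K)
    have h2 : Nat.Coprime (p ^ (s + 1)) c' :=
      Nat.Coprime.pow_left _ ((hp.coprime_iff_not_dvd).2 hc)
    have h3 : p ^ (s + 1) ∣ n := h2.dvd_of_dvd_mul_left h1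
    exact Nat.pow_succ_factorization_not_dvd hval hp h3
  have hfact : q.factorization p = s := by
    have hle : s ≤ q.factorization p :=
      (Nat.Prime.pow_dvd_iff_le_factorization hp hq0).1 hdvd1
    have hlt : ¬ (s + 1 ≤ q.factorization p) := fun h =>
      hndvd1 ((Nat.Prime.pow_dvd_iff_le_factorization hp hq0).2 h)
    omega
  have hq2 : q / p ^ s + p ^ (r - s) * K = c' * m := by
    apply Nat.eq_of_mul_eq_mul_left (pow_pos hp.pos s)
    have e1 : p ^ s * (q / p ^ s) = q := Nat.mul_div_cancel' hdvd1
    have e2 : p ^ s * (p ^ (r - s) * K) = p ^ r * K := by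
      rw [← mul_assoc, ← pow_add]
      congr 2
      omega
    calc p ^ s * (q / p ^ s + p ^ (r - s) * K)
        = p ^ s * (q / p ^ s) + p ^ s * (p ^ (r - s) * K) := by ring
      _ = q + p ^ r * K := by rw [e1, e2]
      _ = c' * n := heq
      _ = c' * (p ^ s * m) := by rw [hnm]
      _ = p ^ s * (c' * m) := by ring
  have hcast : ((q / p ^ s : ℕ) : ZMod p) + ((p ^ (r - s) * K : ℕ) : ZMod p)
      = ((c' * m : ℕ) : ZMod p) := by
    rw [← Nat.cast_add, hq2]
  have hzero : ((p ^ (r - s) * K : ℕ) : ZMod p) = 0 := by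
    rw [ZMod.natCast_eq_zero_iff]
    exact dvd_mul_of_dvd_left (dvd_pow_self p (by omega)) K
  have hnu : nuP p r (c * x) = s := hfact
  rw [rhoP, hnu]
  rw [hzero, add_zero] at hcast
  rw [hcast, Nat.cast_mul]
  rfl

end rho

section rho2
variable {p r : ℕ} [Fact p.Prime]

lemma isUnit_of_val_not_dvd {c : ZMod (p ^ r)} (hc : ¬ p ∣ c.val) : IsUnit c := by
  have hp : p.Prime := Fact.out
  haveI : NeZero (p ^ r) := ⟨pow_ne_zero r hp.pos.ne'⟩
  have h1 : Nat.Coprime c.val (p ^ r) :=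
    Nat.Coprime.pow_right r (Nat.Coprime.symm ((hp.coprime_iff_not_dvd).2 hc))
  have := (ZMod.isUnit_iff_coprime c.val (p ^ r)).2 h1
  rwa [ZMod.natCast_rightInverse c] at this

lemma val_cast_eq_castHom (hr : r ≠ 0) (c : ZMod (p ^ r)) :
    ((c.val : ℕ) : ZMod p) = ZMod.castHom (dvd_pow_self p hr) (ZMod p) c := by
  have hp : p.Prime := Fact.out
  haveI : NeZero (p ^ r) := ⟨pow_ne_zero r hp.pos.ne'⟩
  rw [ZMod.castHom_apply, ZMod.natCast_val]

lemma intCast_val_mod_p (hr : r ≠ 0) (j : ℤ) :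
    ((((j : ZMod (p ^ r))).val : ℕ) : ZMod p) = (j : ZMod p) := by
  rw [val_cast_eq_castHom hr, map_intCast]

lemma not_dvd_val_intCast (hr : r ≠ 0) {j : ℤ} (hj : (j : ZMod p) ≠ 0) :
    ¬ p ∣ ((j : ZMod (p ^ r))).val := by
  intro hdvd
  apply hj
  rw [← intCast_val_mod_p hr j, ZMod.natCast_eq_zero_iff]
  exact hdvd

lemma isUnit_intCast_pr (hr : r ≠ 0) {j : ℤ} (hj : (j : ZMod p) ≠ 0) :
    IsUnit ((j : ZMod (p ^ r))) :=
  isUnit_of_val_not_dvd (not_dvd_val_intCast hr hj)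

lemma rhoP_intCast_mul (hr : r ≠ 0) {j : ℤ} {x : ZMod (p ^ r)} (hx : x ≠ 0)
    (hj : (j : ZMod p) ≠ 0) :
    (j : ZMod (p ^ r)) * x ≠ 0 ∧ rhoP p r ((j : ZMod (p ^ r)) * x) = (j : ZMod p) * rhoP p r x := by
  have h := rhoP_mul (p := p) (r := r) ((j : ZMod (p ^ r))) x hx (not_dvd_val_intCast hr hj)
  rwa [intCast_val_mod_p hr j] at h

lemma rhoP_lift (hr : r ≠ 0) {a : ZMod p} (ha : a ≠ 0) :
    ((a.val : ZMod (p ^ r))) ≠ 0 ∧ rhoP p r ((a.val : ZMod (p ^ r))) = a := by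
  have hp : p.Prime := Fact.out
  haveI : NeZero (p ^ r) := ⟨pow_ne_zero r hp.pos.ne'⟩
  haveI : NeZero p := ⟨hp.pos.ne'⟩
  have hpr : p ≤ p ^ r := by
    calc p = p ^ 1 := (pow_one p).symm
      _ ≤ p ^ r := Nat.pow_le_pow_right hp.pos (by omega)
  have hlt : a.val < p ^ r := lt_of_lt_of_le a.val_lt hpr
  have hv : ((a.val : ZMod (p ^ r))).val = a.val := ZMod.val_cast_of_lt hlt
  have hav : a.val ≠ 0 := fun h => ha ((ZMod.val_eq_zero a).1 h)
  have hne : ((a.val : ZMod (p ^ r))) ≠ 0 := by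
    intro h
    apply hav
    rw [← hv, h, ZMod.val_zero]
  refine ⟨hne, ?_⟩
  have hnu : nuP p r ((a.val : ZMod (p ^ r))) = 0 := by
    show (((a.val : ZMod (p ^ r))).val).factorization p = 0
    rw [hv]
    exact Nat.factorization_eq_zero_of_not_dvd (Nat.not_dvd_of_pos_of_lt (Nat.pos_of_ne_zero hav) a.val_lt)
  rw [rhoP, hnu, hv, pow_zero, Nat.div_one]
  exact ZMod.natCast_rightInverse a

end rho2

section squares
variable {p : ℕ} [Fact p.Prime]

lemma isSq_mul_sq {a b : ZMod p} (ha : a ≠ 0) (hb : b ≠ 0) (hbs : IsSquare b) :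
    IsSquare (a * b) ↔ IsSquare a := by
  have hab : a * b ≠ 0 := mul_ne_zero ha hb
  rw [← quadraticChar_one_iff_isSquare hab, ← quadraticChar_one_iff_isSquare ha, map_mul,
    (quadraticChar_one_iff_isSquare hb).2 hbs, mul_one]

lemma isSq_mul_nonsq {a b : ZMod p} (ha : a ≠ 0) (hb : b ≠ 0) (hbn : ¬ IsSquare b) :
    IsSquare (a * b) ↔ ¬ IsSquare a := by
  have hab : a * b ≠ 0 := mul_ne_zero ha hb
  have hχb : quadraticChar (ZMod p) b = -1 := quadraticChar_neg_one_iff_not_isSquare.2 hbn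
  rcases quadraticChar_dichotomy ha with h1 | h1
  · have hA : IsSquare a := (quadraticChar_one_iff_isSquare ha).1 h1
    have hAB : ¬ IsSquare (a * b) := by
      intro hs
      have h2 := (quadraticChar_one_iff_isSquare hab).2 hs
      rw [map_mul, h1, hχb] at h2
      omega
    exact iff_of_false hAB (by simp [hA])
  · have hA : ¬ IsSquare a := by
      intro hs
      have h2 := (quadraticChar_one_iff_isSquare ha).2 hs
      omega
    have hAB : IsSquare (a * b) := by
      rw [← quadraticChar_one_iff_isSquare hab, map_mul, h1, hχb]
      ring
    exact iff_of_true hAB hA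

end squares

section counting
variable {p r : ℕ} [Fact p.Prime]

open Finset

lemma rho_fiber_cards (hr : r ≠ 0) :
    ∀ a b : ZMod p, a ≠ 0 → b ≠ 0 →
      ((univ : Finset (ZMod (p ^ r))).filter (fun x => x ≠ 0 ∧ rhoP p r x = a)).card
      ≤ ((univ : Finset (ZMod (p ^ r))).filter (fun x => x ≠ 0 ∧ rhoP p r x = b)).card := by
  classical
  intro a b ha hb
  have hp : p.Prime := Fact.out
  haveI : NeZero p := ⟨hp.pos.ne'⟩
  set u : ZMod p := b * a⁻¹ with hu
  have hu0 : u ≠ 0 := mul_ne_zero hb (inv_ne_zero ha)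
  set c : ZMod (p ^ r) := ((u.val : ℕ) : ZMod (p ^ r)) with hc
  obtain ⟨hc0, hcrho⟩ := rhoP_lift hr hu0
  have hcval : c.val = u.val := ZMod.val_cast_of_lt (by
    have hpr : p ≤ p ^ r := by
      calc p = p ^ 1 := (pow_one p).symm
        _ ≤ p ^ r := Nat.pow_le_pow_right hp.pos (by omega)
    exact lt_of_lt_of_le u.val_lt hpr)
  have hcnd : ¬ p ∣ c.val := by
    rw [hcval]
    intro hdvd
    apply hu0
    have : u.val < p := u.val_lt
    have : u.val = 0 := by
      rcases hdvd with ⟨t, ht⟩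
      rcases Nat.eq_zero_or_pos t with h | h
      · rw [h, mul_zero] at ht
        omega
      · have h2 : p * 1 ≤ p * t := Nat.mul_le_mul_left p h
        have h3 : p * 1 = p := mul_one p
        omega
    exact (ZMod.val_eq_zero u).1 this
  apply Finset.card_le_card_of_injOn (fun x => c * x)
  · intro x hx
    rw [Finset.mem_coe, Finset.mem_filter] at hx ⊢
    obtain ⟨-, hx0, hxa⟩ := hx
    obtain ⟨hne, hrho⟩ := rhoP_mul c x hx0 hcnd
    refine ⟨Finset.mem_univ _, hne, ?_⟩
    rw [hrho, hcval]
    have : ((u.val : ℕ) : ZMod p) = u := ZMod.natCast_rightInverse u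
    rw [this, hxa, hu, mul_assoc, inv_mul_cancel₀ ha, mul_one]
  · intro x hx y hy hxy
    exact (isUnit_of_val_not_dvd hcnd).mul_left_cancel hxy

lemma rho_fiber_card_eq (hr : r ≠ 0) (a b : ZMod p) (ha : a ≠ 0) (hb : b ≠ 0) :
    ((univ : Finset (ZMod (p ^ r))).filter (fun x => x ≠ 0 ∧ rhoP p r x = a)).card
    = ((univ : Finset (ZMod (p ^ r))).filter (fun x => x ≠ 0 ∧ rhoP p r x = b)).card :=
  le_antisymm (rho_fiber_cards hr a b ha hb) (rho_fiber_cards hr b a hb ha)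

lemma count_rho_in (hr : r ≠ 0) (G : Finset (ZMod p)) (hG : (0 : ZMod p) ∉ G) :
    ∃ e0 : ℕ,
      ((univ : Finset (ZMod (p ^ r))).filter (fun x => x ≠ 0 ∧ rhoP p r x ∈ G)).card = G.card * e0
      ∧ (p - 1) * e0 = p ^ r - 1 := by
  classical
  have hp : p.Prime := Fact.out
  haveI : NeZero p := ⟨hp.pos.ne'⟩
  haveI : NeZero (p ^ r) := ⟨pow_ne_zero r hp.pos.ne'⟩
  set E : ZMod p → Finset (ZMod (p ^ r)) :=
    fun a => (univ : Finset (ZMod (p ^ r))).filter (fun x => x ≠ 0 ∧ rhoP p r x = a) with hE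
  set e0 : ℕ := (E 1).card with he0
  refine ⟨e0, ?_, ?_⟩
  · -- card of filter = G.card * e0
    have hsub : ∀ x ∈ (univ : Finset (ZMod (p ^ r))).filter (fun x => x ≠ 0 ∧ rhoP p r x ∈ G),
        rhoP p r x ∈ G := by
      intro x hx
      exact (Finset.mem_filter.1 hx).2.2
    rw [Finset.card_eq_sum_card_fiberwise hsub]
    have : ∀ a ∈ G, (((univ : Finset (ZMod (p ^ r))).filter
        (fun x => x ≠ 0 ∧ rhoP p r x ∈ G)).filter (fun x => rhoP p r x = a)).card = e0 := by
      intro a haG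
      have ha : a ≠ 0 := fun h => hG (h ▸ haG)
      have heq : ((univ : Finset (ZMod (p ^ r))).filter
          (fun x => x ≠ 0 ∧ rhoP p r x ∈ G)).filter (fun x => rhoP p r x = a) = E a := by
        ext x
        simp only [Finset.mem_filter, Finset.mem_univ, true_and, hE]
        constructor
        · rintro ⟨⟨h1, _⟩, h3⟩; exact ⟨h1, h3⟩
        · rintro ⟨h1, h2⟩; exact ⟨⟨h1, h2 ▸ haG⟩, h2⟩
      rw [heq, he0]
      exact rho_fiber_card_eq hr a 1 ha one_ne_zero
    rw [Finset.sum_congr rfl this, Finset.sum_const, smul_eq_mul]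
  · -- (p-1) * e0 = p^r - 1
    have hbase : ((univ : Finset (ZMod (p ^ r))).erase 0).card = p ^ r - 1 := by
      rw [Finset.card_erase_of_mem (Finset.mem_univ _), Finset.card_univ, ZMod.card]
    have hmap : ∀ x ∈ (univ : Finset (ZMod (p ^ r))).erase 0,
        rhoP p r x ∈ (univ : Finset (ZMod p)).erase 0 := by
      intro x hx
      exact Finset.mem_erase.2 ⟨rhoP_ne_zero (Finset.mem_erase.1 hx).1, Finset.mem_univ _⟩
    have := Finset.card_eq_sum_card_fiberwise hmap
    rw [hbase] at this
    have hfib : ∀ a ∈ (univ : Finset (ZMod p)).erase 0,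
        (((univ : Finset (ZMod (p ^ r))).erase 0).filter (fun x => rhoP p r x = a)).card = e0 := by
      intro a haG
      have ha : a ≠ 0 := (Finset.mem_erase.1 haG).1
      have heq : ((univ : Finset (ZMod (p ^ r))).erase 0).filter (fun x => rhoP p r x = a)
          = E a := by
        ext x
        constructor
        · intro hx
          rw [Finset.mem_filter, Finset.mem_erase] at hx
          exact Finset.mem_filter.2 ⟨Finset.mem_univ _, hx.1.1, hx.2⟩
        · intro hx
          rw [Finset.mem_filter] at hx
          exact Finset.mem_filter.2 ⟨Finset.mem_erase.2 ⟨hx.2.1, Finset.mem_univ _⟩, hx.2.2⟩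
      rw [heq, he0]
      exact rho_fiber_card_eq hr a 1 ha one_ne_zero
    rw [Finset.sum_congr rfl hfib, Finset.sum_const, smul_eq_mul] at this
    rw [this]
    congr 1
    rw [Finset.card_erase_of_mem (Finset.mem_univ _), Finset.card_univ, ZMod.card]

end counting

section countT
variable {p r : ℕ} [Fact p.Prime]
open Finset

lemma count_T (hr : r ≠ 0) (hp2 : p ≠ 2) :
    ((univ : Finset (ZMod (p ^ r))).filter (fun x => x ≠ 0 ∧ IsSquare (rhoP p r x))).card * 2
      = p ^ r - 1 := by
  classical
  have hp : p.Prime := Fact.out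
  haveI : NeZero p := ⟨hp.pos.ne'⟩
  haveI : NeZero (p ^ r) := ⟨pow_ne_zero r hp.pos.ne'⟩
  set Tf := (univ : Finset (ZMod (p ^ r))).filter (fun x => x ≠ 0 ∧ IsSquare (rhoP p r x)) with hTf
  set Tc := (univ : Finset (ZMod (p ^ r))).filter (fun x => x ≠ 0 ∧ ¬ IsSquare (rhoP p r x)) with hTc
  -- total
  have htot : Tf.card + Tc.card = p ^ r - 1 := by
    have h1 : Tf = ((univ : Finset (ZMod (p ^ r))).erase 0).filter
        (fun x => IsSquare (rhoP p r x)) := by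
      ext x
      simp only [hTf, Finset.mem_filter, Finset.mem_erase, Finset.mem_univ, true_and, and_true]
    have h2 : Tc = ((univ : Finset (ZMod (p ^ r))).erase 0).filter
        (fun x => ¬ IsSquare (rhoP p r x)) := by
      ext x
      simp only [hTc, Finset.mem_filter, Finset.mem_erase, Finset.mem_univ, true_and, and_true]
    rw [h1, h2, Finset.card_filter_add_card_filter_not,
      Finset.card_erase_of_mem (Finset.mem_univ _), Finset.card_univ, ZMod.card]
  -- bijection between Tf and Tc
  obtain ⟨n0, hn0⟩ := FiniteField.exists_nonsquare
    (F := ZMod p) (by rw [ZMod.ringChar_zmod_n]; exact hp2)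
  have hn00 : n0 ≠ 0 := by
    intro h
    exact hn0 (h ▸ (by exact ⟨0, by ring⟩ : IsSquare (0 : ZMod p)))
  set c : ZMod (p ^ r) := ((n0.val : ℕ) : ZMod (p ^ r)) with hc
  have hcval : c.val = n0.val := ZMod.val_cast_of_lt (by
    have hpr : p ≤ p ^ r := by
      calc p = p ^ 1 := (pow_one p).symm
        _ ≤ p ^ r := Nat.pow_le_pow_right hp.pos (by omega)
    exact lt_of_lt_of_le n0.val_lt hpr)
  have hcnd : ¬ p ∣ c.val := by
    rw [hcval]
    intro hdvd
    apply hn00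
    have hlt : n0.val < p := n0.val_lt
    have : n0.val = 0 := by
      rcases hdvd with ⟨t, ht⟩
      rcases Nat.eq_zero_or_pos t with h | h
      · rw [h, mul_zero] at ht; omega
      · have h2 : p * 1 ≤ p * t := Nat.mul_le_mul_left p h
        have h3 : p * 1 = p := mul_one p
        omega
    exact (ZMod.val_eq_zero n0).1 this
  have hcv : ((c.val : ℕ) : ZMod p) = n0 := by rw [hcval]; exact ZMod.natCast_rightInverse n0
  have key : ∀ x : ZMod (p ^ r), x ≠ 0 →
      (c * x ≠ 0 ∧ (IsSquare (rhoP p r (c * x)) ↔ ¬ IsSquare (rhoP p r x))) := by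
    intro x hx0
    obtain ⟨hne, hrho⟩ := rhoP_mul c x hx0 hcnd
    refine ⟨hne, ?_⟩
    rw [hrho, hcv, mul_comm]
    exact isSq_mul_nonsq (rhoP_ne_zero hx0) hn00 hn0
  have hle1 : Tf.card ≤ Tc.card := by
    apply Finset.card_le_card_of_injOn (fun x => c * x)
    · intro x hx
      rw [hTf, Finset.mem_coe, Finset.mem_filter] at hx
      obtain ⟨-, hx0, hxs⟩ := hx
      obtain ⟨hne, hiff⟩ := key x hx0
      exact Finset.mem_filter.2 ⟨Finset.mem_univ _, hne, (by rw [hiff]; simp [hxs])⟩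
    · intro x _ y _ hxy
      exact (isUnit_of_val_not_dvd hcnd).mul_left_cancel hxy
  have hle2 : Tc.card ≤ Tf.card := by
    apply Finset.card_le_card_of_injOn (fun x => c * x)
    · intro x hx
      rw [hTc, Finset.mem_coe, Finset.mem_filter] at hx
      obtain ⟨-, hx0, hxs⟩ := hx
      obtain ⟨hne, hiff⟩ := key x hx0
      exact Finset.mem_filter.2 ⟨Finset.mem_univ _, hne, (by rw [hiff]; exact hxs)⟩
    · intro x _ y _ hxy
      exact (isUnit_of_val_not_dvd hcnd).mul_left_cancel hxy
  omega

end countT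

def EDset (n w : ℕ) (g : ZMod n) : Set (ZMod n) := {x | ∃ k : ℕ, k < w ∧ x = (k : ZMod n) * g}

section ED
variable {n w : ℕ}

lemma intCast_sub_mul (n : ℕ) (a b : ℕ) (g : ZMod n) :
    (Int.cast ((a : ℤ) - (b : ℤ)) : ZMod n) * g = (a : ZMod n) * g - (b : ZMod n) * g := by
  push_cast
  ring

lemma EDset_inj (g : ZMod n)
    (hg : ∀ j : ℤ, j ≠ 0 → j.natAbs ≤ w - 1 → (j : ZMod n) * g ≠ 0) :
    Set.InjOn (fun k : ℕ => (k : ZMod n) * g) (Set.Iio w) := by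
  intro a ha b hb hab
  by_contra hne
  have hab' : (a : ZMod n) * g = (b : ZMod n) * g := hab
  have hj : ((a : ℤ) - (b : ℤ)) ≠ 0 := sub_ne_zero.2 (by exact_mod_cast hne)
  have hjn : ((a : ℤ) - (b : ℤ)).natAbs ≤ w - 1 := by
    simp only [Set.mem_Iio] at ha hb
    omega
  apply hg _ hj hjn
  rw [intCast_sub_mul, hab', sub_self]

lemma EDset_ncard (hw : 1 ≤ w) (g : ZMod n)
    (hg : ∀ j : ℤ, j ≠ 0 → j.natAbs ≤ w - 1 → (j : ZMod n) * g ≠ 0) :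
    (EDset n w g).ncard = w := by
  have himg : EDset n w g = (fun k : ℕ => (k : ZMod n) * g) '' (Set.Iio w) := by
    ext x
    constructor
    · rintro ⟨k, hk, rfl⟩; exact ⟨k, hk, rfl⟩
    · rintro ⟨k, hk, rfl⟩; exact ⟨k, hk, rfl⟩
  rw [himg, Set.ncard_image_of_injOn (EDset_inj g hg), ← Finset.coe_range,
    Set.ncard_coe_finset, Finset.card_range]

lemma EDset_dstar (hw : 1 ≤ w) (g : ZMod n)
    (hg : ∀ j : ℤ, j ≠ 0 → j.natAbs ≤ w - 1 → (j : ZMod n) * g ≠ 0) :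
    dstar (EDset n w g) = {x | ∃ j : ℤ, j ≠ 0 ∧ j.natAbs ≤ w - 1 ∧ x = (j : ZMod n) * g} := by
  ext x
  constructor
  · rintro ⟨hx, hx0⟩
    rw [Set.mem_sub] at hx
    obtain ⟨aa, ⟨k, hk, rfl⟩, bb, ⟨k', hk', rfl⟩, rfl⟩ := hx
    refine ⟨(k : ℤ) - (k' : ℤ), ?_, by omega, (intCast_sub_mul n k k' g).symm⟩
    intro h
    apply hx0
    have hkk : (k : ZMod n) * g - (k' : ZMod n) * g = 0 := by
      rw [← intCast_sub_mul, h]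
      simp
    simp [hkk]
  · rintro ⟨j, hj0, hjw, rfl⟩
    constructor
    · rw [Set.mem_sub]
      rcases Int.natAbs_eq j with h | h
      · refine ⟨(j.natAbs : ZMod n) * g, ⟨j.natAbs, by omega, rfl⟩,
          ((0 : ℕ) : ZMod n) * g, ⟨0, by omega, rfl⟩, ?_⟩
        have hcast : ((j.natAbs : ℕ) : ZMod n) = (Int.cast j : ZMod n) := by
          conv_rhs => rw [h, Int.cast_natCast]
        rw [Nat.cast_zero, zero_mul, sub_zero, hcast]
      · refine ⟨((0 : ℕ) : ZMod n) * g, ⟨0, by omega, rfl⟩,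
          (j.natAbs : ZMod n) * g, ⟨j.natAbs, by omega, rfl⟩, ?_⟩
        have hcast : (Int.cast j : ZMod n) = -((j.natAbs : ℕ) : ZMod n) := by
          conv_lhs => rw [h, Int.cast_neg, Int.cast_natCast]
        rw [Nat.cast_zero, zero_mul, zero_sub, hcast, neg_mul]
    · simp only [Set.mem_singleton_iff]
      exact hg j hj0 hjw

lemma EDset_zero (hw : 1 ≤ w) : EDset n w 0 = {0} := by
  ext x
  constructor
  · rintro ⟨k, _, rfl⟩; simp
  · rintro rfl; exact ⟨0, by omega, by simp⟩

end ED

section construction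
open Finset

lemma construction (p w r : ℕ) [Fact p.Prime] (hw : 2 ≤ w) (hpw : 2 * w - 1 ≤ p) (hr : r ≠ 0)
    (hdvd : 2 * w - 2 ∣ p - 1)
    (hlegIff : ∀ j : ℤ, 1 ≤ j → j ≤ (w : ℤ) - 1 →
      (IsSquare ((j : ZMod p)) ↔ ¬ IsSquare (((j - w : ℤ) : ZMod p))))
    (Gb : Set (ZMod p)) (hGb0 : (0 : ZMod p) ∉ Gb)
    (hGinj : ∀ g ∈ Gb, ∀ g' ∈ Gb, ∀ j j' : ℤ, j ≠ 0 → j.natAbs ≤ w - 1 →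
      j' ≠ 0 → j'.natAbs ≤ w - 1 →
      (j : ZMod p) * g = (j' : ZMod p) * g' → g = g' ∧ j = j')
    (hGcard : Gb.ncard = (p - 1) / (2 * w - 2)) :
    ∃ C : Set (Set (ZMod (w * p ^ r))),
      ((∀ S ∈ C, S.ncard = w) ∧
        ∀ S ∈ C, ∀ T ∈ C, S ≠ T → Disjoint (dstar S) (dstar T)) ∧
      (∀ S ∈ C, ∃ g : ZMod (w * p ^ r), S = EDset (w * p ^ r) w g) ∧
      C.ncard = (p ^ r - 1) / (2 * w - 2) + (p ^ r - 1) / 2 + 1 := by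
  classical
  have hp : p.Prime := Fact.out
  haveI : NeZero p := ⟨hp.pos.ne'⟩
  haveI : NeZero (p ^ r) := ⟨pow_ne_zero r hp.pos.ne'⟩
  haveI : NeZero w := ⟨by omega⟩
  haveI : Fact (1 < w) := ⟨by omega⟩
  have hp2 : p ≠ 2 := by omega
  have hcop : Nat.Coprime w (p ^ r) :=
    Nat.Coprime.pow_right r (Nat.Coprime.symm (hp.coprime_iff_not_dvd.2
      (fun hdvd' => by have := Nat.le_of_dvd (by omega) hdvd'; omega)))
  set e := ZMod.chineseRemainder hcop with he
  -- coordinates of j • e.symm (A, B)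
  have hcoords : ∀ (j : ℤ) (A : ZMod w) (B : ZMod (p ^ r)),
      (j : ZMod (w * p ^ r)) * e.symm (A, B) = e.symm ((j : ZMod w) * A, (j : ZMod (p ^ r)) * B) := by
    intro j A B
    apply e.injective
    rw [map_mul, RingEquiv.apply_symm_apply, RingEquiv.apply_symm_apply, map_intCast]
    apply Prod.ext
    · simp
    · simp
  have hpair : ∀ (A A' : ZMod w) (B B' : ZMod (p ^ r)),
      e.symm (A, B) = e.symm (A', B') → A = A' ∧ B = B' := by
    intro A A' B B' h
    have h2 := e.symm.injective h
    exact ⟨congrArg Prod.fst h2, congrArg Prod.snd h2⟩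
  have hsymm_zero : e.symm (0, 0) = 0 := by
    have : ((0 : ZMod w), (0 : ZMod (p ^ r))) = 0 := rfl
    rw [this, map_zero]
  -- nonvanishing of small integer multiples
  have hjw : ∀ j : ℤ, j ≠ 0 → j.natAbs ≤ w - 1 → ((j : ZMod w)) ≠ 0 := by
    intro j hj0 hjn h
    rw [ZMod.intCast_zmod_eq_zero_iff_dvd] at h
    have h2 : w ∣ j.natAbs := by
      have h3 := Int.natAbs_dvd_natAbs.2 h
      simpa using h3
    have := Nat.le_of_dvd (Int.natAbs_pos.2 hj0) h2
    omega
  have hjp : ∀ j : ℤ, j ≠ 0 → j.natAbs ≤ 2 * w - 2 → ((j : ZMod p)) ≠ 0 := by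
    intro j hj0 hjn h
    rw [ZMod.intCast_zmod_eq_zero_iff_dvd] at h
    have h2 : p ∣ j.natAbs := by
      have h3 := Int.natAbs_dvd_natAbs.2 h
      simpa using h3
    have := Nat.le_of_dvd (Int.natAbs_pos.2 hj0) h2
    omega
  -- the parameter set
  set Tset : Set (ZMod (p ^ r)) := {t | t ≠ 0 ∧ IsSquare (rhoP p r t)} with hTset
  set Uset : Set (ZMod (p ^ r)) := {u | u ≠ 0 ∧ rhoP p r u ∈ Gb} with hUset
  set P : Set (ZMod w × ZMod (p ^ r)) :=
    (((fun t => ((1 : ZMod w), t)) '' Tset) ∪ ((fun u => ((0 : ZMod w), u)) '' Uset)) ∪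
      {((1 : ZMod w), (0 : ZMod (p ^ r)))} with hPdef
  -- the generator condition
  have hgP : ∀ γ ∈ P, ∀ j : ℤ, j ≠ 0 → j.natAbs ≤ w - 1 →
      (j : ZMod (w * p ^ r)) * e.symm γ ≠ 0 := by
    rintro γ hγ j hj0 hjn h
    have h1 : (j : ZMod w) ≠ 0 := hjw j hj0 hjn
    rcases hγ with (⟨t, ht, rfl⟩ | ⟨u, hu, rfl⟩) | hγ0
    · rw [hcoords] at h
      rw [← hsymm_zero] at h
      obtain ⟨hA, _⟩ := hpair _ _ _ _ h
      rw [mul_one] at hA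
      exact h1 hA
    · rw [hcoords] at h
      rw [← hsymm_zero] at h
      obtain ⟨_, hB⟩ := hpair _ _ _ _ h
      have hju : IsUnit ((j : ZMod (p ^ r))) := isUnit_intCast_pr hr (hjp j hj0 (by omega))
      exact hu.1 ((hju.mul_right_eq_zero).1 hB)
    · obtain rfl := hγ0
      rw [hcoords] at h
      rw [← hsymm_zero] at h
      obtain ⟨hA, _⟩ := hpair _ _ _ _ h
      rw [mul_one] at hA
      exact h1 hA
  have hdstarP : ∀ γ ∈ P, dstar (EDset (w * p ^ r) w (e.symm γ)) =
      {x | ∃ j : ℤ, j ≠ 0 ∧ j.natAbs ≤ w - 1 ∧ x = (j : ZMod (w * p ^ r)) * e.symm γ} :=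
    fun γ hγ => EDset_dstar (by omega) _ (hgP γ hγ)
  -- the key arithmetic core for the T family
  have hTTcore : ∀ (t t' : ZMod (p ^ r)), t ∈ Tset → t' ∈ Tset → ∀ j : ℤ,
      1 ≤ j → j ≤ (w : ℤ) - 1 →
      (j : ZMod (p ^ r)) * t = ((j - w : ℤ) : ZMod (p ^ r)) * t' → False := by
    intro t t' ht ht' j h1 h2 heq
    have hjpn : ((j : ZMod p)) ≠ 0 := hjp j (by omega) (by omega)
    have hjwn : (((j - w : ℤ) : ZMod p)) ≠ 0 := hjp _ (by omega) (by omega)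
    obtain ⟨hL0, hLr⟩ := rhoP_intCast_mul hr ht.1 hjpn
    obtain ⟨hR0, hRr⟩ := rhoP_intCast_mul hr ht'.1 hjwn
    have hrho : (j : ZMod p) * rhoP p r t = ((j - w : ℤ) : ZMod p) * rhoP p r t' := by
      rw [← hLr, ← hRr, heq]
    have hsq : IsSquare ((j : ZMod p)) ↔ IsSquare (((j - w : ℤ) : ZMod p)) := by
      rw [← isSq_mul_sq hjpn (rhoP_ne_zero ht.1) ht.2,
        ← isSq_mul_sq hjwn (rhoP_ne_zero ht'.1) ht'.2, hrho]
    have := hlegIff j h1 h2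
    tauto
  -- main equation analysis
  have hEq : ∀ γ ∈ P, ∀ γ' ∈ P, ∀ j j' : ℤ, j ≠ 0 → j.natAbs ≤ w - 1 →
      j' ≠ 0 → j'.natAbs ≤ w - 1 →
      (j : ZMod (w * p ^ r)) * e.symm γ = (j' : ZMod (w * p ^ r)) * e.symm γ' → γ = γ' := by
    rintro γ hγ γ' hγ' j j' hj0 hjn hj'0 hj'n heq
    -- a little helper to split the w-part congruence
    have hsplit : ∀ (h : (j : ZMod w) = (j' : ZMod w)), j = j' ∨ j - j' = w ∨ j - j' = -(w : ℤ) := by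
      intro h
      have hdw : ((j - j' : ℤ) : ZMod w) = 0 := by
        push_cast
        rw [h]
        ring
      rw [ZMod.intCast_zmod_eq_zero_iff_dvd] at hdw
      have h2 : w ∣ (j - j').natAbs := by
        have h3 := Int.natAbs_dvd_natAbs.2 hdw
        simpa using h3
      obtain ⟨k, hk⟩ := h2
      rcases Nat.lt_or_ge k 2 with hk2 | hk2
      · interval_cases k
        · simp at hk
          omega
        · rw [mul_one] at hk
          omega
      · exfalso
        have h4 : w * 2 ≤ w * k := Nat.mul_le_mul_left w hk2
        omega
    have hcancel : ∀ (B B' : ZMod (p ^ r)), (j : ZMod (p ^ r)) * B = (j : ZMod (p ^ r)) * B' →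
        B = B' := by
      intro B B' hB
      exact (isUnit_intCast_pr hr (hjp j hj0 (by omega))).mul_left_cancel hB
    rcases hγ with (⟨t, ht, rfl⟩ | ⟨u, hu, rfl⟩) | hγ0
    · rcases hγ' with (⟨t', ht', rfl⟩ | ⟨u', hu', rfl⟩) | hγ'0
      · -- T vs T
        rw [hcoords, hcoords] at heq
        obtain ⟨hA, hB⟩ := hpair _ _ _ _ heq
        rw [mul_one, mul_one] at hA
        rcases hsplit hA with hjj | hjj | hjj
        · subst hjj
          rw [hcancel t t' hB]
        · exfalso
          have hj'eq : j' = j - w := by omega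
          have hj1 : 1 ≤ j := by omega
          have hj2 : j ≤ (w : ℤ) - 1 := by omega
          apply hTTcore t t' ht ht' j hj1 hj2
          rw [hB, hj'eq]
        · exfalso
          have hjeq : j = j' - w := by omega
          have hj1 : 1 ≤ j' := by omega
          have hj2 : j' ≤ (w : ℤ) - 1 := by omega
          apply hTTcore t' t ht' ht j' hj1 hj2
          rw [← hB, hjeq]
      · -- T vs U : w-components 1*j vs 0
        exfalso
        rw [hcoords, hcoords] at heq
        obtain ⟨hA, -⟩ := hpair _ _ _ _ heq
        rw [mul_one, mul_zero] at hA
        exact hjw j hj0 hjn hA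
      · -- T vs base
        exfalso
        obtain rfl := hγ'0
        rw [hcoords, hcoords] at heq
        obtain ⟨-, hB⟩ := hpair _ _ _ _ heq
        rw [mul_zero] at hB
        have hju : IsUnit ((j : ZMod (p ^ r))) := isUnit_intCast_pr hr (hjp j hj0 (by omega))
        exact ht.1 ((hju.mul_right_eq_zero).1 hB)
    · rcases hγ' with (⟨t', ht', rfl⟩ | ⟨u', hu', rfl⟩) | hγ'0
      · -- U vs T
        exfalso
        rw [hcoords, hcoords] at heq
        obtain ⟨hA, -⟩ := hpair _ _ _ _ heq
        rw [mul_one, mul_zero] at hA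
        exact hjw j' hj'0 hj'n hA.symm
      · -- U vs U
        rw [hcoords, hcoords] at heq
        obtain ⟨-, hB⟩ := hpair _ _ _ _ heq
        have hρ : (j : ZMod p) * rhoP p r u = (j' : ZMod p) * rhoP p r u' := by
          obtain ⟨hL0, hLr⟩ := rhoP_intCast_mul hr hu.1 (hjp j hj0 (by omega))
          obtain ⟨hR0, hRr⟩ := rhoP_intCast_mul hr hu'.1 (hjp j' hj'0 (by omega))
          rw [← hLr, ← hRr, hB]
        obtain ⟨hgg, hjj⟩ := hGinj _ hu.2 _ hu'.2 j j' hj0 hjn hj'0 hj'n hρ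
        subst hjj
        rw [hcancel u u' hB]
      · -- U vs base
        exfalso
        obtain rfl := hγ'0
        rw [hcoords, hcoords] at heq
        obtain ⟨hA, -⟩ := hpair _ _ _ _ heq
        rw [mul_one, mul_zero] at hA
        exact hjw j' hj'0 hj'n hA.symm
    · obtain rfl := hγ0
      rcases hγ' with (⟨t', ht', rfl⟩ | ⟨u', hu', rfl⟩) | hγ'0
      · -- base vs T
        exfalso
        rw [hcoords, hcoords] at heq
        obtain ⟨-, hB⟩ := hpair _ _ _ _ heq
        rw [mul_zero] at hB
        have hju : IsUnit ((j' : ZMod (p ^ r))) := isUnit_intCast_pr hr (hjp j' hj'0 (by omega))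
        exact ht'.1 ((hju.mul_right_eq_zero).1 hB.symm)
      · -- base vs U
        exfalso
        rw [hcoords, hcoords] at heq
        obtain ⟨hA, -⟩ := hpair _ _ _ _ heq
        rw [mul_one, mul_zero] at hA
        exact hjw j hj0 hjn hA
      · obtain rfl := hγ'0
        rfl
  -- pairwise disjointness of the dstar sets
  have hdisjP : ∀ γ ∈ P, ∀ γ' ∈ P, γ ≠ γ' →
      Disjoint (dstar (EDset (w * p ^ r) w (e.symm γ))) (dstar (EDset (w * p ^ r) w (e.symm γ'))) := by
    intro γ hγ γ' hγ' hne
    rw [hdstarP γ hγ, hdstarP γ' hγ', Set.disjoint_left]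
    rintro x ⟨j, hj0, hjn, rfl⟩ ⟨j', hj'0, hj'n, heq⟩
    exact hne (hEq γ hγ γ' hγ' j j' hj0 hjn hj'0 hj'n heq)
  have hnonempty : ∀ γ ∈ P, e.symm γ ∈ dstar (EDset (w * p ^ r) w (e.symm γ)) := by
    intro γ hγ
    rw [hdstarP γ hγ]
    refine ⟨1, one_ne_zero, by simp; omega, by rw [Int.cast_one, one_mul]⟩
  have hinjP : Set.InjOn (fun γ => EDset (w * p ^ r) w (e.symm γ)) P := by
    intro γ hγ γ' hγ' hSeq
    by_contra hne
    have hdisj := hdisjP γ hγ γ' hγ' hne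
    have hmem := hnonempty γ hγ
    have hmem2 : e.symm γ ∈ dstar (EDset (w * p ^ r) w (e.symm γ')) := by
      have hSeq' : EDset (w * p ^ r) w (e.symm γ) = EDset (w * p ^ r) w (e.symm γ') := hSeq
      rw [← hSeq']
      exact hmem
    exact Set.disjoint_left.1 hdisj hmem hmem2
  refine ⟨(fun γ => EDset (w * p ^ r) w (e.symm γ)) '' P, ⟨?_, ?_⟩, ?_, ?_⟩
  · rintro S ⟨γ, hγ, rfl⟩
    exact EDset_ncard (by omega) _ (hgP γ hγ)
  · rintro S ⟨γ, hγ, rfl⟩ T ⟨γ', hγ', rfl⟩ hST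
    exact hdisjP γ hγ γ' hγ' (fun h => hST (by rw [h]))
  · rintro S ⟨γ, hγ, rfl⟩
    exact ⟨e.symm γ, rfl⟩
  · -- cardinality computation
    rw [Set.ncard_image_of_injOn hinjP]
    -- split P
    have hd12 : Disjoint ((fun t => ((1 : ZMod w), t)) '' Tset)
        ((fun u => ((0 : ZMod w), u)) '' Uset) := by
      rw [Set.disjoint_left]
      rintro x ⟨t, ht, rfl⟩ ⟨u, hu, hx⟩
      have := congrArg Prod.fst hx
      simp only at this
      exact one_ne_zero this.symm
    have hd3 : Disjoint (((fun t => ((1 : ZMod w), t)) '' Tset) ∪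
        ((fun u => ((0 : ZMod w), u)) '' Uset)) {((1 : ZMod w), (0 : ZMod (p ^ r)))} := by
      rw [Set.disjoint_right]
      rintro x hx hx2
      obtain rfl := hx
      rcases hx2 with ⟨t, ht, hx⟩ | ⟨u, hu, hx⟩
      · have := congrArg Prod.snd hx
        simp only at this
        exact ht.1 this
      · have := congrArg Prod.fst hx
        simp only at this
        exact one_ne_zero this.symm
    rw [hPdef]
    rw [Set.ncard_union_eq hd3 (Set.toFinite _) (Set.toFinite _)]
    rw [Set.ncard_union_eq hd12 (Set.toFinite _) (Set.toFinite _)]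
    have hT1 : ((fun t => ((1 : ZMod w), t)) '' Tset).ncard = Tset.ncard :=
      Set.ncard_image_of_injective _ (fun a b hab => congrArg Prod.snd hab)
    have hU1 : ((fun u => ((0 : ZMod w), u)) '' Uset).ncard = Uset.ncard :=
      Set.ncard_image_of_injective _ (fun a b hab => congrArg Prod.snd hab)
    have hsing : ({((1 : ZMod w), (0 : ZMod (p ^ r)))} : Set (ZMod w × ZMod (p ^ r))).ncard = 1 :=
      Set.ncard_singleton _
    -- count Tset
    have hTcount : Tset.ncard = (p ^ r - 1) / 2 := by
      have hTfin : Tset = ↑((univ : Finset (ZMod (p ^ r))).filter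
          (fun x => x ≠ 0 ∧ IsSquare (rhoP p r x))) := by
        ext x
        simp only [hTset, Finset.coe_filter, Finset.mem_univ, true_and, Set.mem_setOf_eq]
      rw [hTfin, Set.ncard_coe_finset]
      have := count_T (p := p) (r := r) hr hp2
      omega
    -- count Uset
    have hUcount : Uset.ncard = (p ^ r - 1) / (2 * w - 2) := by
      set Gbf := (Set.toFinite Gb).toFinset with hGbf
      have hGbf0 : (0 : ZMod p) ∉ Gbf := by
        rw [hGbf, Set.Finite.mem_toFinset]
        exact hGb0
      have hUfin : Uset = ↑((univ : Finset (ZMod (p ^ r))).filter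
          (fun x => x ≠ 0 ∧ rhoP p r x ∈ Gbf)) := by
        ext x
        simp only [hUset, Finset.coe_filter, Finset.mem_univ, true_and, Set.mem_setOf_eq]
        rw [Set.Finite.mem_toFinset]
      rw [hUfin, Set.ncard_coe_finset]
      obtain ⟨e0, he1, he2⟩ := count_rho_in (p := p) (r := r) hr Gbf hGbf0
      have hGbcard : Gbf.card = (p - 1) / (2 * w - 2) := by
        rw [hGbf, ← Set.ncard_eq_toFinset_card Gb (Set.toFinite Gb)]
        exact hGcard
      have hd : ((p - 1) / (2 * w - 2)) * (2 * w - 2) = p - 1 := Nat.div_mul_cancel hdvd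
      have hkey : ((univ : Finset (ZMod (p ^ r))).filter
          (fun x => x ≠ 0 ∧ rhoP p r x ∈ Gbf)).card * (2 * w - 2) = p ^ r - 1 := by
        rw [he1, hGbcard]
        calc (p - 1) / (2 * w - 2) * e0 * (2 * w - 2)
            = ((p - 1) / (2 * w - 2) * (2 * w - 2)) * e0 := by ring
          _ = (p - 1) * e0 := by rw [hd]
          _ = p ^ r - 1 := he2
      symm
      exact Nat.div_eq_of_eq_mul_left (by omega) hkey.symm
    rw [hT1, hU1, hsing, hTcount, hUcount]
    omega

end construction

section UB
variable {p w r : ℕ} [Fact p.Prime]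

lemma upper_bound (hw : 2 ≤ w) (hpw : 2 * w - 1 ≤ p) (hr : r ≠ 0)
    (hdvd2 : 2 * w - 2 ∣ p ^ r - 1) (hodd : 2 ∣ p ^ r - 1)
    (C : Set (Set (ZMod (w * p ^ r)))) (hC : IsCAC (w * p ^ r) w C) :
    C.ncard ≤ (p ^ r - 1) / (2 * w - 2) + (p ^ r - 1) / 2 + 1 := by
  classical
  have hp : p.Prime := Fact.out
  have hL : 0 < w * p ^ r := Nat.mul_pos (by omega) (pow_pos hp.pos r)
  haveI : NeZero (w * p ^ r) := ⟨hL.ne'⟩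
  haveI : NeZero w := ⟨by omega⟩
  have hdvdL : p ^ r ∣ w * p ^ r := dvd_mul_left _ _
  set φ : ZMod (w * p ^ r) →+* ZMod (p ^ r) := ZMod.castHom hdvdL (ZMod (p ^ r)) with hφ
  -- C is finite
  have hCfin : C.Finite := Set.toFinite C
  set Cf : Finset (Set (ZMod (w * p ^ r))) := hCfin.toFinset with hCf
  have hncard : C.ncard = Cf.card := Set.ncard_eq_toFinset_card C hCfin
  -- finsets of codewords
  set Sf : Set (ZMod (w * p ^ r)) → Finset (ZMod (w * p ^ r)) := fun S => (Set.toFinite S).toFinset with hSf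
  set Df : Set (ZMod (w * p ^ r)) → Finset (ZMod (w * p ^ r)) := fun S => ((Sf S - Sf S).erase 0) with hDf
  set Af : Set (ZMod (w * p ^ r)) → Finset (ZMod (w * p ^ r)) := fun S => (Df S).filter (fun x => φ x = 0) with hAf
  have hdstar : ∀ S : Set (ZMod (w * p ^ r)), (dstar S : Set (ZMod (w * p ^ r))) = ↑(Df S) := by
    intro S
    rw [hDf]
    simp only [Finset.coe_erase, Finset.coe_sub, Set.Finite.coe_toFinset, hSf]
    rfl
  -- per codeword cardinality
  have hkey : ∀ S ∈ Cf, 2 * w ≤ (Df S).card + (Af S).card + 2 := by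
    intro S hS
    have hSC : S ∈ C := (Set.Finite.mem_toFinset hCfin).1 hS
    have hcard : (Sf S).card = w := by
      rw [hSf]
      rw [← Set.ncard_eq_toFinset_card S (Set.toFinite S)]
      exact hC.1 S hSC
    exact key_ineq hw hpw hr φ (Sf S) hcard
  -- disjointness
  have hdisj : ∀ S ∈ Cf, ∀ T ∈ Cf, S ≠ T → Disjoint (Df S) (Df T) := by
    intro S hS T hT hST
    have h := hC.2 S ((Set.Finite.mem_toFinset hCfin).1 hS) T ((Set.Finite.mem_toFinset hCfin).1 hT) hST
    rw [hdstar S, hdstar T] at h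
    exact Finset.disjoint_coe.1 h
  have hdisjA : ∀ S ∈ Cf, ∀ T ∈ Cf, S ≠ T → Disjoint (Af S) (Af T) := by
    intro S hS T hT hST
    exact Finset.disjoint_filter_filter (hdisj S hS T hT hST)
  -- sum of Df cards
  have hDsum : ∑ S ∈ Cf, (Df S).card ≤ w * p ^ r - 1 := by
    rw [← Finset.card_biUnion hdisj]
    have : Cf.biUnion Df ⊆ (Finset.univ : Finset (ZMod (w * p ^ r))).erase 0 := by
      intro x hx
      rw [Finset.mem_biUnion] at hx
      obtain ⟨S, _, hxS⟩ := hx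
      exact Finset.mem_erase.2 ⟨(Finset.mem_erase.1 hxS).1, Finset.mem_univ x⟩
    calc (Cf.biUnion Df).card ≤ ((Finset.univ : Finset (ZMod (w * p ^ r))).erase 0).card :=
          Finset.card_le_card this
      _ = w * p ^ r - 1 := by
          rw [Finset.card_erase_of_mem (Finset.mem_univ 0), Finset.card_univ, ZMod.card]
  -- kernel of φ has cardinality w
  have hker : ((Finset.univ : Finset (ZMod (w * p ^ r))).filter (fun x => φ x = 0)).card = w := by
    have hbij : (Finset.univ : Finset (ZMod w)).card
        = ((Finset.univ : Finset (ZMod (w * p ^ r))).filter (fun x => φ x = 0)).card := by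
      apply Finset.card_bij (fun (a : ZMod w) _ => ((a.val * p ^ r : ℕ) : ZMod (w * p ^ r)))
      · intro a _
        refine Finset.mem_filter.2 ⟨Finset.mem_univ _, ?_⟩
        rw [map_natCast φ, Nat.cast_mul, ZMod.natCast_self, mul_zero]
      · intro a _ b _ hab
        have hva : (((a.val * p ^ r : ℕ) : ZMod (w * p ^ r))).val = a.val * p ^ r :=
          ZMod.val_cast_of_lt (Nat.mul_lt_mul_of_lt_of_le a.val_lt (le_refl _) (pow_pos hp.pos r))
        have hvb : (((b.val * p ^ r : ℕ) : ZMod (w * p ^ r))).val = b.val * p ^ r :=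
          ZMod.val_cast_of_lt (Nat.mul_lt_mul_of_lt_of_le b.val_lt (le_refl _) (pow_pos hp.pos r))
        have : a.val * p ^ r = b.val * p ^ r := by rw [← hva, ← hvb, hab]
        have hval : a.val = b.val := Nat.eq_of_mul_eq_mul_right (pow_pos hp.pos r) this
        exact ZMod.val_injective _ hval
      · intro x hx
        have hx0 : φ x = 0 := (Finset.mem_filter.1 hx).2
        have : ((x.val : ℕ) : ZMod (p ^ r)) = 0 := by
          rw [ZMod.natCast_val, ← ZMod.castHom_apply (h := hdvdL)]
          exact hx0
        rw [ZMod.natCast_eq_zero_iff] at this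
        obtain ⟨q, hq⟩ := this
        have hqw : q < w := by
          have hvl := x.val_lt
          by_contra h
          push_neg at h
          have h1 : p ^ r * w ≤ p ^ r * q := Nat.mul_le_mul_left _ h
          have hcomm : w * p ^ r = p ^ r * w := mul_comm _ _
          omega
        refine ⟨(q : ZMod w), Finset.mem_univ _, ?_⟩
        have hv : ((q : ZMod w)).val = q := ZMod.val_cast_of_lt hqw
        have h7 : q * p ^ r = x.val := by rw [mul_comm, ← hq]
        rw [hv, h7]
        exact ZMod.natCast_rightInverse x
    rw [← hbij, Finset.card_univ, ZMod.card]
  -- sum of Af cards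
  have hAsum : ∑ S ∈ Cf, (Af S).card ≤ w - 1 := by
    rw [← Finset.card_biUnion hdisjA]
    have : Cf.biUnion Af ⊆ ((Finset.univ : Finset (ZMod (w * p ^ r))).filter (fun x => φ x = 0)).erase 0 := by
      intro x hx
      rw [Finset.mem_biUnion] at hx
      obtain ⟨S, _, hxS⟩ := hx
      rw [hAf, Finset.mem_filter] at hxS
      refine Finset.mem_erase.2 ⟨(Finset.mem_erase.1 hxS.1).1, Finset.mem_filter.2 ⟨Finset.mem_univ _, hxS.2⟩⟩
    calc (Cf.biUnion Af).card
        ≤ (((Finset.univ : Finset (ZMod (w * p ^ r))).filter (fun x => φ x = 0)).erase 0).card :=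
          Finset.card_le_card this
      _ ≤ ((Finset.univ : Finset (ZMod (w * p ^ r))).filter (fun x => φ x = 0)).card - 1 := by
          rw [Finset.card_erase_of_mem]
          refine Finset.mem_filter.2 ⟨Finset.mem_univ _, map_zero φ⟩
      _ = w - 1 := by rw [hker]
    
  -- total
  have htotal : 2 * w * Cf.card ≤ (w * p ^ r - 1) + (w - 1) + 2 * Cf.card := by
    calc 2 * w * Cf.card = ∑ _S ∈ Cf, 2 * w := by rw [Finset.sum_const, smul_eq_mul, mul_comm]
      _ ≤ ∑ S ∈ Cf, ((Df S).card + (Af S).card + 2) := Finset.sum_le_sum hkey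
      _ = (∑ S ∈ Cf, (Df S).card) + (∑ S ∈ Cf, (Af S).card) + 2 * Cf.card := by
          rw [Finset.sum_add_distrib, Finset.sum_add_distrib, Finset.sum_const, smul_eq_mul]
          ring_nf
      _ ≤ (w * p ^ r - 1) + (w - 1) + 2 * Cf.card := by
          have := hDsum; have := hAsum; omega
  -- arithmetic
  set a := (p ^ r - 1) / (2 * w - 2) with ha
  set b := (p ^ r - 1) / 2 with hb
  have haa : a * (2 * w - 2) = p ^ r - 1 := Nat.div_mul_cancel hdvd2
  have hbb : b * 2 = p ^ r - 1 := Nat.div_mul_cancel hodd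
  have hpr1 : 1 ≤ p ^ r := Nat.one_le_pow _ _ hp.pos
  have hkeyid : (2 * w - 2) * (a + b + 1) = w * p ^ r + w - 2 := by
    have h1 : (2 * w - 2) * a = p ^ r - 1 := by rw [mul_comm]; exact haa
    have h2 : (2 * w - 2) * b = (w - 1) * (p ^ r - 1) := by
      have hh : 2 * w - 2 = (w - 1) * 2 := by omega
      rw [hh, mul_assoc, mul_comm 2 b, hbb]
    have h3 : (2 * w - 2) * (a + b + 1) = (2 * w - 2) * a + (2 * w - 2) * b + (2 * w - 2) := by
      ring
    have h44 : (p ^ r - 1) + (w - 1) * (p ^ r - 1) = w * (p ^ r - 1) := by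
      have hww : w = (w - 1) + 1 := by omega
      calc (p ^ r - 1) + (w - 1) * (p ^ r - 1) = ((w - 1) + 1) * (p ^ r - 1) := by ring
        _ = w * (p ^ r - 1) := by rw [← hww]
    have h45 : w * (p ^ r - 1) + w = w * p ^ r := by
      have : (p ^ r - 1) + 1 = p ^ r := by omega
      calc w * (p ^ r - 1) + w = w * ((p ^ r - 1) + 1) := by ring
        _ = w * p ^ r := by rw [this]
    rw [h3, h1, h2]
    omega
  rw [hncard]
  refine Nat.le_of_mul_le_mul_left ?_ (show 0 < 2 * w - 2 by omega)
  have hsplit : 2 * w * #Cf = (2 * w - 2) * #Cf + 2 * #Cf := by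
    have h2w : 2 * w = (2 * w - 2) + 2 := by omega
    calc 2 * w * #Cf = ((2 * w - 2) + 2) * #Cf := by rw [← h2w]
      _ = (2 * w - 2) * #Cf + 2 * #Cf := by ring
  omega

end UB


theorem stmt14 (p w : ℕ) [Fact p.Prime] (hdvd : 2 * w - 2 ∣ p - 1)
    (hleg : ∀ i : ℕ, 1 ≤ i → i ≤ w - 1 →
      legendreSym p i * legendreSym p ((i : ℤ) - w) = -1)
    (h : ∃ C : Set (Set (ZMod p)), IsECAC p w C ∧ C.ncard = (p - 1) / (2 * w - 2)) :
    ∀ r : ℕ, 1 ≤ r →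
      IsGreatest
        {n : ℕ | ∃ C : Set (Set (ZMod (w * p ^ r))),
          IsCAC (w * p ^ r) w C ∧ C.ncard = n}
        ((p ^ r - 1) / (2 * w - 2) + (p ^ r - 1) / 2 + 1) := by
  classical
  have hp : p.Prime := Fact.out
  haveI : NeZero p := ⟨hp.pos.ne'⟩
  have hw2 : 2 ≤ w := by
    by_contra hcon
    have h0 : 2 * w - 2 = 0 := by omega
    rw [h0] at hdvd
    have h1 := Nat.eq_zero_of_zero_dvd hdvd
    have h2 := hp.two_le
    omega
  have hpw : 2 * w - 1 ≤ p := by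
    have h1 : 2 * w - 2 ≤ p - 1 := Nat.le_of_dvd (by have := hp.two_le; omega) hdvd
    have := hp.two_le
    omega
  -- the Legendre hypothesis in terms of IsSquare
  have hlegIff : ∀ j : ℤ, 1 ≤ j → j ≤ (w : ℤ) - 1 →
      (IsSquare ((j : ZMod p)) ↔ ¬ IsSquare (((j - w : ℤ) : ZMod p))) := by
    intro j h1 h2
    set i : ℕ := j.toNat with hi
    have hi1 : 1 ≤ i := by omega
    have hi2 : i ≤ w - 1 := by omega
    have hcast : ((i : ℕ) : ℤ) = j := by omega
    have hLx := hleg i hi1 hi2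
    rw [hcast] at hLx
    have hjne : ((j : ZMod p)) ≠ 0 := by
      rw [Ne, ZMod.intCast_zmod_eq_zero_iff_dvd]
      intro hdvd'
      have := Int.le_of_dvd (by omega) hdvd'
      omega
    have hjwne : (((j - w : ℤ) : ZMod p)) ≠ 0 := by
      rw [Ne, ZMod.intCast_zmod_eq_zero_iff_dvd]
      intro hdvd'
      rw [← dvd_neg] at hdvd'
      have := Int.le_of_dvd (by omega) hdvd'
      omega
    rcases legendreSym.eq_one_or_neg_one p hjne with hA | hA <;>
      rcases legendreSym.eq_one_or_neg_one p hjwne with hB | hB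
    · exfalso; rw [hA, hB] at hLx; omega
    · exact iff_of_true ((legendreSym.eq_one_iff p hjne).1 hA)
        ((legendreSym.eq_neg_one_iff p).1 hB)
    · exact iff_of_false ((legendreSym.eq_neg_one_iff p).1 hA)
        (not_not_intro ((legendreSym.eq_one_iff p hjwne).1 hB))
    · exfalso; rw [hA, hB] at hLx; omega
  -- extract the generator set mod p from the hypothesis h
  obtain ⟨C0, ⟨⟨hC0card, hC0disj⟩, hC0ed⟩, hC0n⟩ := h
  choose! f hf using hC0ed
  have hfED : ∀ S ∈ C0, S = EDset p w (f S) := fun S hS => hf S hS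
  set Gb : Set (ZMod p) := f '' C0 with hGbdef
  have hGb0 : (0 : ZMod p) ∉ Gb := by
    rintro ⟨S, hS, hfS⟩
    have h1 := hC0card S hS
    have h2 : S = EDset p w (f S) := hfED S hS
    rw [hfS] at h2
    rw [EDset_zero (show 1 ≤ w by omega)] at h2
    rw [h2, Set.ncard_singleton] at h1
    omega
  have hjpP : ∀ j : ℤ, j ≠ 0 → j.natAbs ≤ 2 * w - 2 → ((j : ZMod p)) ≠ 0 := by
    intro j hj0 hjn hcast
    rw [ZMod.intCast_zmod_eq_zero_iff_dvd] at hcast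
    have h2 : p ∣ j.natAbs := by
      have h3 := Int.natAbs_dvd_natAbs.2 hcast
      simpa using h3
    have := Nat.le_of_dvd (Int.natAbs_pos.2 hj0) h2
    omega
  have hGne : ∀ g ∈ Gb, g ≠ 0 := fun g hg h0 => hGb0 (h0 ▸ hg)
  have hgood : ∀ g ∈ Gb, ∀ j : ℤ, j ≠ 0 → j.natAbs ≤ w - 1 → (j : ZMod p) * g ≠ 0 := by
    intro g hg j hj0 hjn
    exact mul_ne_zero (hjpP j hj0 (by omega)) (hGne g hg)
  have hdstarG : ∀ g ∈ Gb, dstar (EDset p w g) =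
      {x | ∃ j : ℤ, j ≠ 0 ∧ j.natAbs ≤ w - 1 ∧ x = (j : ZMod p) * g} :=
    fun g hg => EDset_dstar (by omega) g (hgood g hg)
  have hGinj : ∀ g ∈ Gb, ∀ g' ∈ Gb, ∀ j j' : ℤ, j ≠ 0 → j.natAbs ≤ w - 1 →
      j' ≠ 0 → j'.natAbs ≤ w - 1 →
      (j : ZMod p) * g = (j' : ZMod p) * g' → g = g' ∧ j = j' := by
    intro g hg g' hg' j j' hj0 hjn hj'0 hj'n heq
    have hgg : g = g' := by
      by_contra hne
      obtain ⟨S, hS, rfl⟩ := hg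
      obtain ⟨S', hS', rfl⟩ := hg'
      have hSS : S ≠ S' := fun hSSeq => hne (by rw [hSSeq])
      have hdisj := hC0disj S hS S' hS' hSS
      have hdS : dstar S = {x | ∃ jj : ℤ, jj ≠ 0 ∧ jj.natAbs ≤ w - 1 ∧
          x = (jj : ZMod p) * f S} := by
        conv_lhs => rw [hfED S hS]
        exact hdstarG (f S) ⟨S, hS, rfl⟩
      have hdS' : dstar S' = {x | ∃ jj : ℤ, jj ≠ 0 ∧ jj.natAbs ≤ w - 1 ∧
          x = (jj : ZMod p) * f S'} := by
        conv_lhs => rw [hfED S' hS']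
        exact hdstarG (f S') ⟨S', hS', rfl⟩
      have hx1 : (j : ZMod p) * f S ∈ dstar S := by
        rw [hdS]
        exact ⟨j, hj0, hjn, rfl⟩
      have hx2 : (j : ZMod p) * f S ∈ dstar S' := by
        rw [hdS']
        exact ⟨j', hj'0, hj'n, heq⟩
      exact Set.disjoint_left.1 hdisj hx1 hx2
    refine ⟨hgg, ?_⟩
    subst hgg
    have hg0 : g ≠ 0 := hGne g hg
    have h1 : ((j : ZMod p) - (j' : ZMod p)) * g = 0 := by rw [sub_mul, heq, sub_self]
    have h2 : ((j - j' : ℤ) : ZMod p) * g = 0 := by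
      push_cast
      exact h1
    have h3 : ((j - j' : ℤ) : ZMod p) = 0 := by
      rcases mul_eq_zero.1 h2 with h | h
      · exact h
      · exact absurd h hg0
    rw [ZMod.intCast_zmod_eq_zero_iff_dvd] at h3
    by_contra hne
    have hjj0 : j - j' ≠ 0 := by omega
    have h4 : p ∣ (j - j').natAbs := by
      have h5 := Int.natAbs_dvd_natAbs.2 h3
      simpa using h5
    have := Nat.le_of_dvd (Int.natAbs_pos.2 hjj0) h4
    omega
  have hGcard : Gb.ncard = (p - 1) / (2 * w - 2) := by
    rw [hGbdef, Set.ncard_image_of_injOn, hC0n]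
    intro S hS S' hS' hff
    rw [hfED S hS, hfED S' hS', hff]
  intro r hr
  have hr0 : r ≠ 0 := by omega
  have hdvd2 : 2 * w - 2 ∣ p ^ r - 1 := by
    refine dvd_trans hdvd ?_
    have h1 := Nat.sub_dvd_pow_sub_pow p 1 r
    simpa using h1
  have hodd : 2 ∣ p ^ r - 1 := by
    have hodd' : Odd (p ^ r) := (hp.odd_of_ne_two (by omega)).pow
    obtain ⟨k, hk⟩ := hodd'
    omega
  constructor
  · obtain ⟨C, hC1, hC2, hC3⟩ := construction p w r hw2 hpw hr0 hdvd hlegIff Gb hGb0 hGinj hGcard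
    exact ⟨C, ⟨hC1.1, hC1.2⟩, hC3⟩
  · rintro n ⟨C, hC, rfl⟩
    exact upper_bound hw2 hpw hr0 hdvd2 hodd C hC
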